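/- arXiv:1303.3737 — 2 statements merged into one kernel-verified Lean document; each statement's English description precedes it below -/
import Mathlib

section
/- Let 𝒞 be a Z2Z4-additive code of type (α, β; γ, δ; κ) with γ = κ, with generator matrix 𝒢 = [[I_κ, T_b, 2T_2, 0], [0, S_b, S_q, I_δ]]. Then for every (u,v) ∈ Z2^γ × Z4^δ, the codeword (u,v)·𝒢 has the form (u, z, v) for some z ∈ Z2^{α−γ} × Z4^{β−δ}; consequently, the map f(a) = Φ(Φ^{-1}(a)·𝒢) is a systematic encoding of C = Φ(𝒞) for the information set I = {1,…,κ} ∪ {α+2(β−δ)+1, …, α+2β} in binary coordinates. -/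
/-- The ambient group Z2^α × Z4^β. -/
abbrev Vab (α β : ℕ) := (Fin α → ZMod 2) × (Fin β → ZMod 4)

/-- The Gray map φ : Z4 → Z2². -/
def gray (a : ZMod 4) : ZMod 2 × ZMod 2 :=
  if a = 0 then (0, 0) else if a = 1 then (0, 1) else if a = 2 then (1, 1) else (1, 0)

/-- The componentwise Gray map Φ : Z2^{n1} × Z4^{n2} → F2^{n1+2n2}. -/
def Phi (n1 n2 : ℕ) (u : Vab n1 n2) : Fin (n1 + 2 * n2) → ZMod 2 := fun i =>
  if h : (i : ℕ) < n1 then u.1 ⟨i, h⟩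
  else
    have hj : ((i : ℕ) - n1) / 2 < n2 := by have := i.isLt; omega
    if ((i : ℕ) - n1) % 2 = 0 then (gray (u.2 ⟨((i : ℕ) - n1) / 2, hj⟩)).1
    else (gray (u.2 ⟨((i : ℕ) - n1) / 2, hj⟩)).2


def grayInv (p : ZMod 2 × ZMod 2) : ZMod 4 :=
  if p = (0,0) then 0 else if p = (0,1) then 1 else if p = (1,1) then 2 else 3

lemma gray_grayInv : ∀ p : ZMod 2 × ZMod 2, gray (grayInv p) = p := by decide

lemma grayInv_gray : ∀ a : ZMod 4, grayInv (gray a) = a := by decide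

def PhiInv (n1 n2 : ℕ) (a : Fin (n1 + 2 * n2) → ZMod 2) : Vab n1 n2 :=
  (fun k => a ⟨k, by have := k.isLt; omega⟩,
   fun j => grayInv (a ⟨n1 + 2 * j, by have := j.isLt; omega⟩,
                     a ⟨n1 + 2 * j + 1, by have := j.isLt; omega⟩))

lemma Phi_PhiInv (n1 n2 : ℕ) (a : Fin (n1 + 2 * n2) → ZMod 2) :
    Phi n1 n2 (PhiInv n1 n2 a) = a := by
  funext i
  unfold Phi PhiInv
  by_cases h : (i : ℕ) < n1
  · rw [dif_pos h]
  · rw [dif_neg h]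
    simp only [gray_grayInv]
    split
    · exact congrArg a (Fin.ext (by simp; omega))
    · exact congrArg a (Fin.ext (by simp; omega))

lemma PhiInv_Phi (n1 n2 : ℕ) (u : Vab n1 n2) : PhiInv n1 n2 (Phi n1 n2 u) = u := by
  unfold PhiInv Phi
  refine Prod.ext ?_ ?_
  · funext k
    simp only
    rw [dif_pos (show ((⟨(k:ℕ), by have := k.isLt; omega⟩ : Fin (n1+2*n2)) : ℕ) < n1 from k.isLt)]
  · funext j
    simp only
    rw [dif_neg (by simp), dif_neg (by simp; omega)]
    rw [if_pos (by simp), if_neg (by simp; omega)]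
    have h1 : (n1 + 2 * (j:ℕ) - n1) / 2 = (j:ℕ) := by omega
    have h2 : (n1 + 2 * (j:ℕ) + 1 - n1) / 2 = (j:ℕ) := by omega
    simp only [h1, h2]
    rw [show (⟨(j:ℕ), by omega⟩ : Fin n2) = j from Fin.ext rfl]
    exact grayInv_gray _

/-- The natural inclusion of Z2 = {0,1} into Z4. -/
def toZ4 (a : ZMod 2) : ZMod 4 := a.val

/-- Reduction mod 2 of Z4. -/
def toZ2 (a : ZMod 4) : ZMod 2 := a.val

section

/- Parameters: γ = κ, α = κ + a2, β = b1 + δ. -/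
variable (κ a2 b1 δ : ℕ)
variable (Tb : Matrix (Fin κ) (Fin a2) (ZMod 2)) (Sb : Matrix (Fin δ) (Fin a2) (ZMod 2))
variable (T2 : Matrix (Fin κ) (Fin b1) (ZMod 4)) (Sq : Matrix (Fin δ) (Fin b1) (ZMod 4))

/-- The codeword of the Z2Z4-additive code (case γ = κ) with generator matrix
𝒢 = [[I_κ, T_b | 2T_2, 0], [0, S_b | S_q, I_δ]] corresponding to the message
(u, v) ∈ Z2^κ × Z4^δ; this is (u,v)·𝒢. -/
def encodeFree (u : Fin κ → ZMod 2) (v : Fin δ → ZMod 4) : Vab (κ + a2) (b1 + δ) :=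
  (Fin.append u (fun i => ∑ j, u j * Tb j i + ∑ l, toZ2 (v l) * Sb l i),
   Fin.append (fun i => ∑ j, 2 * toZ4 (u j) * T2 j i + ∑ l, v l * Sq l i) v)

/-- The information set I = {1,…,κ} ∪ {α+2(β−δ)+1,…,α+2β} in binary
coordinates, as an injection. -/
def Ifree : Fin (κ + 2 * δ) → Fin ((κ + a2) + 2 * (b1 + δ)) := fun m =>
  ⟨if (m : ℕ) < κ then (m : ℕ) else (κ + a2) + 2 * b1 + ((m : ℕ) - κ),
   by have := m.isLt; split_ifs <;> omega⟩


lemma encodeFree_key (u : Fin κ → ZMod 2) (v : Fin δ → ZMod 4) (m : Fin (κ + 2 * δ)) :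
    Phi _ _ (encodeFree κ a2 b1 δ Tb Sb T2 Sq u v) (Ifree κ a2 b1 δ m)
      = Phi κ δ (u, v) m := by
  have hm2 := m.isLt
  by_cases hm : (m : ℕ) < κ
  · have hI : Ifree κ a2 b1 δ m = ⟨(m:ℕ), by omega⟩ := Fin.ext (by simp [Ifree, hm])
    rw [hI]
    unfold Phi
    rw [dif_pos (show (m:ℕ) < κ + a2 by omega), dif_pos hm]
    show (encodeFree κ a2 b1 δ Tb Sb T2 Sq u v).1 (Fin.castAdd a2 ⟨(m:ℕ), hm⟩) = _
    simp only [encodeFree, Fin.append_left]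
  · have hI : Ifree κ a2 b1 δ m = ⟨(κ + a2) + 2 * b1 + ((m:ℕ) - κ), by omega⟩ :=
      Fin.ext (by simp [Ifree, hm])
    rw [hI]
    unfold Phi
    rw [dif_neg (by simp; omega), dif_neg hm]
    have e1 : ((κ + a2) + 2 * b1 + ((m:ℕ) - κ) - (κ + a2)) % 2 = ((m:ℕ) - κ) % 2 := by omega
    have e2 : ((κ + a2) + 2 * b1 + ((m:ℕ) - κ) - (κ + a2)) / 2 = b1 + ((m:ℕ) - κ) / 2 := by
      omega
    simp only [e1, e2]
    have hlt : ((m:ℕ) - κ) / 2 < δ := by omega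
    have hv : (encodeFree κ a2 b1 δ Tb Sb T2 Sq u v).2 ⟨b1 + ((m:ℕ) - κ) / 2, by omega⟩
        = v ⟨((m:ℕ) - κ) / 2, hlt⟩ := by
      rw [show (⟨b1 + ((m:ℕ) - κ) / 2, by omega⟩ : Fin (b1 + δ))
            = Fin.natAdd b1 ⟨((m:ℕ) - κ) / 2, hlt⟩ from Fin.ext rfl]
      simp only [encodeFree, Fin.append_right]
    rw [hv]

/-- For a Z2Z4-additive code of type (α,β;γ,δ;κ) with γ = κ and generator
matrix 𝒢 = [[I_κ, T_b, 2T_2, 0], [0, S_b, S_q, I_δ]]: every codeword (u,v)·𝒢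
has the form (u, z, v), and consequently f(a) = Φ(Φ⁻¹(a)·𝒢) is a systematic
encoding of C = Φ(𝒞) for the information set
I = {1,…,κ} ∪ {α+2(β−δ)+1,…,α+2β}. -/
theorem encodeFree_systematic :
    (∀ (u : Fin κ → ZMod 2) (v : Fin δ → ZMod 4),
      (∀ j : Fin κ, (encodeFree κ a2 b1 δ Tb Sb T2 Sq u v).1 (Fin.castAdd a2 j) = u j) ∧
      (∀ l : Fin δ, (encodeFree κ a2 b1 δ Tb Sb T2 Sq u v).2 (Fin.natAdd b1 l) = v l)) ∧
    (let f : (Fin (κ + 2 * δ) → ZMod 2) → (Fin ((κ + a2) + 2 * (b1 + δ)) → ZMod 2) :=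
      fun a =>
        Phi _ _ (encodeFree κ a2 b1 δ Tb Sb T2 Sq
          (Function.invFun (Phi κ δ) a).1 (Function.invFun (Phi κ δ) a).2)
     Function.Injective f ∧
     Set.range f = {w | ∃ u v, w = Phi _ _ (encodeFree κ a2 b1 δ Tb Sb T2 Sq u v)} ∧
     ∀ a m, f a (Ifree κ a2 b1 δ m) = a m) := by
  have hinj : Function.Injective (Phi κ δ) :=
    Function.LeftInverse.injective (PhiInv_Phi κ δ)
  have hsurj : Function.Surjective (Phi κ δ) :=
    Function.RightInverse.surjective (fun a => Phi_PhiInv κ δ a)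
  have hleft : ∀ u : Vab κ δ, Function.invFun (Phi κ δ) (Phi κ δ u) = u :=
    Function.leftInverse_invFun hinj
  have hright : ∀ a, Phi κ δ (Function.invFun (Phi κ δ) a) = a :=
    Function.rightInverse_invFun hsurj
  constructor
  · intro u v
    refine ⟨fun j => ?_, fun l => ?_⟩
    · simp only [encodeFree, Fin.append_left]
    · simp only [encodeFree, Fin.append_right]
  · intro f
    have hsys : ∀ a m, f a (Ifree κ a2 b1 δ m) = a m := by
      intro a m
      show Phi _ _ (encodeFree κ a2 b1 δ Tb Sb T2 Sq
          (Function.invFun (Phi κ δ) a).1 (Function.invFun (Phi κ δ) a).2)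
          (Ifree κ a2 b1 δ m) = a m
      rw [encodeFree_key]
      show Phi κ δ (Function.invFun (Phi κ δ) a) m = a m
      rw [hright a]
    refine ⟨?_, ?_, hsys⟩
    · intro a b hab
      funext m
      rw [← hsys a m, ← hsys b m, hab]
    · ext w
      constructor
      · rintro ⟨a, rfl⟩
        exact ⟨_, _, rfl⟩
      · rintro ⟨u, v, rfl⟩
        refine ⟨Phi κ δ (u, v), ?_⟩
        show Phi _ _ (encodeFree κ a2 b1 δ Tb Sb T2 Sq
            (Function.invFun (Phi κ δ) (Phi κ δ (u, v))).1
            (Function.invFun (Phi κ δ) (Phi κ δ (u, v))).2) = _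
        rw [hleft (u, v)]


end
end

section
/- Let 𝒞 ⊆ Z2^α × Z4^β be a Z2Z4-additive code with standard-form generator matrix 𝒢 and parity check matrix ℋ as in (2) and (3). Then for every x ∈ 𝒞, ℋ xᵀ = 0, and conversely every y ∈ Z2^α × Z4^β with ℋ yᵀ = 0 lies in 𝒞; i.e., 𝒞 = ker ℋ. -/
section

/- Parameters: α = κ + a2, γ = κ + g2, β = b1 + g2 + δ,
   where b1 = β + κ - γ - δ. -/
variable (κ a2 g2 b1 δ : ℕ)
variable (Tb : Matrix (Fin κ) (Fin a2) (ZMod 2)) (Sb : Matrix (Fin δ) (Fin a2) (ZMod 2))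
variable (T2 : Matrix (Fin κ) (Fin b1) (ZMod 4)) (T1 : Matrix (Fin g2) (Fin b1) (ZMod 4))
variable (Sq : Matrix (Fin δ) (Fin b1) (ZMod 4)) (R : Matrix (Fin δ) (Fin g2) (ZMod 4))

/-- The codeword of the Z2Z4-additive code with standard-form generator matrix
𝒢 = [[I_κ, T_b | 2T_2, 0, 0], [0, 0 | 2T_1, 2I_{γ-κ}, 0], [0, S_b | S_q, R, I_δ]]
corresponding to the message (b, c, d) ∈ Z2^κ × Z2^{γ-κ} × Z4^δ. -/
def encodeStd (b : Fin κ → ZMod 2) (c : Fin g2 → ZMod 2) (d : Fin δ → ZMod 4) :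
    Vab (κ + a2) (b1 + g2 + δ) :=
  (Fin.append b (fun i => ∑ j, b j * Tb j i + ∑ l, toZ2 (d l) * Sb l i),
   Fin.append
     (Fin.append
       (fun i => ∑ j, 2 * toZ4 (b j) * T2 j i + ∑ j, 2 * toZ4 (c j) * T1 j i
         + ∑ l, d l * Sq l i)
       (fun i => 2 * toZ4 (c i) + ∑ l, d l * R l i))
     d)

/-- The inner product ⟨u,v⟩ = 2·Σ u_i v_i + Σ u_j v_j ∈ Z4 on Z2^α × Z4^β. -/
def zinner {α β : ℕ} (u v : Vab α β) : ZMod 4 :=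
  2 * ∑ i, toZ4 (u.1 i) * toZ4 (v.1 i) + ∑ j, u.2 j * v.2 j

/-- Row i of the first block [T_bᵀ, I_{α−κ} | 0, 0, 2S_bᵀ] of the standard-form
parity check matrix ℋ. -/
def hrowA (i : Fin a2) : Vab (κ + a2) (b1 + g2 + δ) :=
  (Fin.append (fun j => Tb j i) (Pi.single i 1),
   Fin.append (Fin.append (0 : Fin b1 → ZMod 4) (0 : Fin g2 → ZMod 4))
     (fun l => 2 * toZ4 (Sb l i)))

/-- Row i of the second block [0, 0 | 0, 2I_{γ−κ}, 2Rᵀ] of ℋ. -/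
def hrowB (i : Fin g2) : Vab (κ + a2) (b1 + g2 + δ) :=
  ((0 : Fin (κ + a2) → ZMod 2),
   Fin.append (Fin.append (0 : Fin b1 → ZMod 4) (fun j => if j = i then 2 else 0))
     (fun l => 2 * R l i))

/-- Row i of the third block [T_2ᵀ, 0 | I_{β+κ−γ−δ}, T_1ᵀ, −(S_q + R T_1)ᵀ] of ℋ. -/
def hrowC (i : Fin b1) : Vab (κ + a2) (b1 + g2 + δ) :=
  (Fin.append (fun j => toZ2 (T2 j i)) (0 : Fin a2 → ZMod 2),
   Fin.append (Fin.append (Pi.single i (1 : ZMod 4)) (fun j => T1 j i))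
     (fun l => -(Sq l i + ∑ j, R l j * T1 j i)))

/- ### Auxiliary lemmas -/

/-- The additive hom a ↦ 2·toZ4 a from Z2 to Z4. -/
def two4 : ZMod 2 →+ ZMod 4 where
  toFun a := 2 * toZ4 a
  map_zero' := by decide
  map_add' := by decide

lemma two4_apply (a : ZMod 2) : two4 a = 2 * toZ4 a := rfl
lemma toZ4_one : toZ4 1 = 1 := rfl
lemma toZ4_zero : toZ4 0 = 0 := rfl
lemma two4_mul (a b : ZMod 2) : two4 (a * b) = 2 * toZ4 a * toZ4 b := by revert a b; decide
lemma two4_eq_zero (a : ZMod 2) : two4 a = 0 ↔ a = 0 := by revert a; decide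
lemma two_shift (a b : ZMod 4) : 2 * a * b = a * b * 2 := by ring
lemma toZ4_toZ2 (a : ZMod 2) (d : ZMod 4) :
    toZ4 a * toZ4 (toZ2 d) * 2 = toZ4 a * d * 2 := by revert a d; decide
lemma two_toZ4_toZ2 (x : ZMod 4) (a : ZMod 2) :
    2 * toZ4 (toZ2 x) * toZ4 a = 2 * toZ4 a * x := by revert x a; decide
lemma mullem (a : ZMod 2) (x : ZMod 4) :
    toZ4 a * x * 2 = toZ4 (toZ2 x) * toZ4 a * 2 := by revert a x; decide
def halve (x : ZMod 4) : ZMod 2 := if x = 2 then 1 else 0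
lemma halve_spec (x : ZMod 4) (h : 2 * x = 0) : x = 2 * toZ4 (halve x) := by
  revert x; decide
lemma four_eq_zero : (4 : ZMod 4) = 0 := rfl

lemma zinnerA_eq (v : Vab (κ + a2) (b1 + g2 + δ)) (i : Fin a2) :
    zinner (hrowA κ a2 g2 b1 δ Tb Sb i) v =
      two4 (v.1 (Fin.natAdd κ i) + (∑ j, v.1 (Fin.castAdd a2 j) * Tb j i
        + ∑ l, toZ2 (v.2 (Fin.natAdd (b1 + g2) l)) * Sb l i)) := by
  simp only [zinner, hrowA, Fin.sum_univ_add, Fin.append_left, Fin.append_right,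
    Pi.zero_apply, zero_mul, Finset.sum_const_zero, zero_add, add_zero,
    map_add, map_sum, Pi.single_apply]
  simp only [two4_mul]
  simp only [two4_apply, apply_ite toZ4, toZ4_one, toZ4_zero,
    ite_mul, one_mul, zero_mul, Finset.sum_ite_eq', Finset.mem_univ, if_true]
  simp only [mul_add, Finset.mul_sum, Finset.sum_mul, two_shift, toZ4_toZ2]
  have e1 : ∑ x : Fin κ, 2 * (toZ4 (Tb x i) * toZ4 (v.1 (Fin.castAdd a2 x)))
      = ∑ x : Fin κ, toZ4 (v.1 (Fin.castAdd a2 x)) * toZ4 (Tb x i) * 2 :=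
    Finset.sum_congr rfl fun x _ => by ring
  have e2 : ∑ x : Fin δ, toZ4 (Sb x i) * v.2 (Fin.natAdd (b1 + g2) x) * 2
      = ∑ x : Fin δ, toZ4 (toZ2 (v.2 (Fin.natAdd (b1 + g2) x))) * toZ4 (Sb x i) * 2 :=
    Finset.sum_congr rfl fun x _ => mullem _ _
  linear_combination e1 + e2

lemma zinnerB_eq (v : Vab (κ + a2) (b1 + g2 + δ)) (i : Fin g2) :
    zinner (hrowB κ a2 g2 b1 δ R i) v =
      2 * (v.2 (Fin.castAdd δ (Fin.natAdd b1 i))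
        + ∑ l, v.2 (Fin.natAdd (b1 + g2) l) * R l i) := by
  simp only [zinner, hrowB, Fin.sum_univ_add, Fin.append_left, Fin.append_right,
    Pi.zero_apply, toZ4_zero, zero_mul, Finset.sum_const_zero, mul_zero, zero_add,
    ite_mul, Finset.sum_ite_eq', Finset.mem_univ, if_true]
  simp only [mul_add, Finset.mul_sum, Finset.sum_mul, two_shift]
  have e1 : ∑ x : Fin δ, R x i * v.2 (Fin.natAdd (b1 + g2) x) * 2
      = ∑ x : Fin δ, 2 * (v.2 (Fin.natAdd (b1 + g2) x) * R x i) :=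
    Finset.sum_congr rfl fun x _ => by ring
  rw [e1]

lemma zinnerC_eq (v : Vab (κ + a2) (b1 + g2 + δ)) (i : Fin b1) :
    zinner (hrowC κ a2 g2 b1 δ T2 T1 Sq R i) v =
      ∑ j, 2 * toZ4 (v.1 (Fin.castAdd a2 j)) * T2 j i
      + v.2 (Fin.castAdd δ (Fin.castAdd g2 i))
      + ∑ j, T1 j i * v.2 (Fin.castAdd δ (Fin.natAdd b1 j))
      - ∑ l, (Sq l i + ∑ j, R l j * T1 j i) * v.2 (Fin.natAdd (b1 + g2) l) := by
  simp only [zinner, hrowC, Fin.sum_univ_add, Fin.append_left, Fin.append_right,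
    Pi.zero_apply, toZ4_zero, zero_mul, mul_zero, Finset.sum_const_zero, zero_add, add_zero,
    Pi.single_apply, ite_mul, one_mul, Finset.sum_ite_eq', Finset.mem_univ, if_true,
    neg_mul, Finset.sum_neg_distrib]
  have e1 : 2 * ∑ x : Fin κ, toZ4 (toZ2 (T2 x i)) * toZ4 (v.1 (Fin.castAdd a2 x))
      = ∑ j, 2 * toZ4 (v.1 (Fin.castAdd a2 j)) * T2 j i := by
    rw [Finset.mul_sum]
    exact Finset.sum_congr rfl fun x _ => by
      rw [← mul_assoc]; exact two_toZ4_toZ2 _ _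
  linear_combination e1

lemma sum_double_zero {ι : Type*} [Fintype ι] (g h : ι → ZMod 4)
    (hgh : ∀ j, g j + h j = 0) : (∑ j, g j) + ∑ j, h j = 0 := by
  rw [← Finset.sum_add_distrib]
  exact Finset.sum_eq_zero fun j _ => hgh j

lemma coreC (b : Fin κ → ZMod 2) (c : Fin g2 → ZMod 2) (d : Fin δ → ZMod 4)
    (f : ZMod 4) (i : Fin b1) :
    (∑ j, 2 * toZ4 (b j) * T2 j i) + f
      + (∑ j, T1 j i * (2 * toZ4 (c j) + ∑ l, d l * R l j))
      - ∑ l, (Sq l i + ∑ j, R l j * T1 j i) * d l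
    = 0 ↔
    f = ∑ j, 2 * toZ4 (b j) * T2 j i + ∑ j, 2 * toZ4 (c j) * T1 j i
        + ∑ l, d l * Sq l i := by
  have hd : ∑ j, T1 j i * ∑ l, d l * R l j
      = ∑ l, (∑ j, R l j * T1 j i) * d l := by
    simp only [Finset.mul_sum, Finset.sum_mul]
    rw [Finset.sum_comm]
    exact Finset.sum_congr rfl fun l _ => Finset.sum_congr rfl fun j _ => by ring
  have hb : ∑ j, T1 j i * (2 * toZ4 (c j)) = ∑ j, 2 * toZ4 (c j) * T1 j i :=
    Finset.sum_congr rfl fun j _ => by ring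
  have hc : ∑ l, Sq l i * d l = ∑ l, d l * Sq l i :=
    Finset.sum_congr rfl fun l _ => by ring
  have hA : (∑ j, 2 * toZ4 (b j) * T2 j i) + ∑ j, 2 * toZ4 (b j) * T2 j i = 0 :=
    sum_double_zero _ _ fun j => by linear_combination (toZ4 (b j) * T2 j i) * four_eq_zero
  have hB : (∑ j, 2 * toZ4 (c j) * T1 j i) + ∑ j, 2 * toZ4 (c j) * T1 j i = 0 :=
    sum_double_zero _ _ fun j => by linear_combination (toZ4 (c j) * T1 j i) * four_eq_zero
  have key : (∑ j, 2 * toZ4 (b j) * T2 j i) + f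
      + (∑ j, T1 j i * (2 * toZ4 (c j) + ∑ l, d l * R l j))
      - ∑ l, (Sq l i + ∑ j, R l j * T1 j i) * d l
      = f - (∑ j, 2 * toZ4 (b j) * T2 j i + ∑ j, 2 * toZ4 (c j) * T1 j i
        + ∑ l, d l * Sq l i) := by
    simp only [mul_add, add_mul, Finset.sum_add_distrib]
    rw [hd, hb, hc]
    linear_combination hA + hB
  rw [key, sub_eq_zero]


/-- For a Z2Z4-additive code 𝒞 with standard-form generator matrix 𝒢 and
parity check matrix ℋ: a vector y ∈ Z2^α × Z4^β is a codeword (ℋ xᵀ = 0 for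
every codeword x) if and only if ℋ yᵀ = 0; i.e. 𝒞 = ker ℋ. -/
theorem code_eq_ker_paritycheck (y : Vab (κ + a2) (b1 + g2 + δ)) :
    (∃ b c d, y = encodeStd κ a2 g2 b1 δ Tb Sb T2 T1 Sq R b c d) ↔
      ((∀ i, zinner (hrowA κ a2 g2 b1 δ Tb Sb i) y = 0) ∧
       (∀ i, zinner (hrowB κ a2 g2 b1 δ R i) y = 0) ∧
       (∀ i, zinner (hrowC κ a2 g2 b1 δ T2 T1 Sq R i) y = 0)) := by
  constructor
  · rintro ⟨b, c, d, rfl⟩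
    refine ⟨fun i => ?_, fun i => ?_, fun i => ?_⟩
    · rw [zinnerA_eq]
      simp only [encodeStd, Fin.append_right, Fin.append_left]
      rw [CharTwo.add_self_eq_zero, map_zero]
    · rw [zinnerB_eq]
      simp only [encodeStd, Fin.append_right, Fin.append_left]
      linear_combination (toZ4 (c i) + ∑ l, d l * R l i) * four_eq_zero
    · rw [zinnerC_eq]
      simp only [encodeStd, Fin.append_right, Fin.append_left]
      exact (coreC κ g2 b1 δ T2 T1 Sq R b c d _ i).mpr rfl
  · rintro ⟨hA, hB, hC⟩
    refine ⟨fun j => y.1 (Fin.castAdd a2 j),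
      fun j => halve (y.2 (Fin.castAdd δ (Fin.natAdd b1 j))
        - ∑ l, y.2 (Fin.natAdd (b1 + g2) l) * R l j),
      fun l => y.2 (Fin.natAdd (b1 + g2) l), ?_⟩
    have hg : ∀ j, y.2 (Fin.castAdd δ (Fin.natAdd b1 j))
        = 2 * toZ4 (halve (y.2 (Fin.castAdd δ (Fin.natAdd b1 j))
            - ∑ l, y.2 (Fin.natAdd (b1 + g2) l) * R l j))
          + ∑ l, y.2 (Fin.natAdd (b1 + g2) l) * R l j := by
      intro j
      have h := hB j
      rw [zinnerB_eq] at h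
      have h2 : 2 * (y.2 (Fin.castAdd δ (Fin.natAdd b1 j))
          - ∑ l, y.2 (Fin.natAdd (b1 + g2) l) * R l j) = 0 := by
        linear_combination h - (∑ l, y.2 (Fin.natAdd (b1 + g2) l) * R l j) * four_eq_zero
      linear_combination halve_spec _ h2
    have he : ∀ i, y.1 (Fin.natAdd κ i)
        = ∑ j, y.1 (Fin.castAdd a2 j) * Tb j i
          + ∑ l, toZ2 (y.2 (Fin.natAdd (b1 + g2) l)) * Sb l i := by
      intro i
      have h := hA i
      rw [zinnerA_eq, two4_eq_zero, ← CharTwo.sub_eq_add] at h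
      exact sub_eq_zero.mp h
    have hf : ∀ i, y.2 (Fin.castAdd δ (Fin.castAdd g2 i))
        = ∑ j, 2 * toZ4 (y.1 (Fin.castAdd a2 j)) * T2 j i
          + ∑ j, 2 * toZ4 (halve (y.2 (Fin.castAdd δ (Fin.natAdd b1 j))
              - ∑ l, y.2 (Fin.natAdd (b1 + g2) l) * R l j)) * T1 j i
          + ∑ l, y.2 (Fin.natAdd (b1 + g2) l) * Sq l i := by
      intro i
      have h := hC i
      rw [zinnerC_eq] at h
      rw [show (∑ j, T1 j i * y.2 (Fin.castAdd δ (Fin.natAdd b1 j)))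
          = ∑ j, T1 j i * (2 * toZ4 (halve (y.2 (Fin.castAdd δ (Fin.natAdd b1 j))
              - ∑ l, y.2 (Fin.natAdd (b1 + g2) l) * R l j))
            + ∑ l, y.2 (Fin.natAdd (b1 + g2) l) * R l j) from
        Finset.sum_congr rfl fun j _ => by rw [← hg j]] at h
      exact (coreC κ g2 b1 δ T2 T1 Sq R _ _ _ _ i).mp h
    refine Prod.ext ?_ ?_ <;> funext x
    · refine Fin.addCases (fun j => ?_) (fun i => ?_) x <;>
        simp only [encodeStd, Fin.append_left, Fin.append_right]
      exact he i
    · refine Fin.addCases (fun q => ?_) (fun l => ?_) x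
      · refine Fin.addCases (fun i => ?_) (fun j => ?_) q <;>
          simp only [encodeStd, Fin.append_left, Fin.append_right]
        · exact hf i
        · exact hg j
      · simp only [encodeStd, Fin.append_right]

end
end
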